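/- Fix η ∈ (0,1) and r > max{ (2η−1)/(2η(1−η)²), (1−2η)/(2(1−η)η²) }. Let G : ℝ³ → ℝ³ be the vector field G(v⁰,v^η,v¹) = ( (1−η)v^η − 2rη v⁰(v¹+ηv^η), −v^η + 2r(η²v⁰v^η + (1−η)²v¹v^η + v⁰v¹), ηv^η − 2r(1−η)v¹(v⁰+(1−η)v^η) ). Then there exists an equilibrium point (v⁰,v^η,v¹) in the interior of the unit simplex, i.e. with v⁰ > 0, v^η > 0, v¹ > 0, v⁰+v^η+v¹ = 1, and G(v⁰,v^η,v¹) = (0,0,0). -/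

import Mathlib

/-!
Write `p = v⁰ + (1-η)v^η` and `q = v¹ + ηv^η` for the overall frequencies of the two parasite
types, so `p + q = v⁰ + v^η + v¹`. The first and third equations then read
`(1-η)v^η = 2rη q v⁰` and `ηv^η = 2r(1-η) p v¹`, and the second is minus their sum. For fixed
`p, q` they give `v⁰ = p / (1 + 2rηq)` and `v¹ = q / (1 + 2r(1-η)p)`, and the two resulting
values of `v^η` agree iff `η²(1 + 2r(1-η)p) = (1-η)²(1 + 2rηq)`. With `q = 1 - p` this is linear
in `p`, and the condition on `r` says exactly that its root lies in `(0, 1)`.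
-/

namespace HostParasite

variable {η r : ℝ}

noncomputable def typeBFreq (η r : ℝ) : ℝ := (1 - η) - (2 * η - 1) / (2 * r * η * (1 - η))

theorem exists_equilibrium_of_balance {p q : ℝ} (hη0 : 0 < η) (hη1 : η < 1) (hr : 0 < r)
    (hp : 0 < p) (hq : 0 < q)
    (hbal : η ^ 2 * (1 + 2 * r * (1 - η) * p) = (1 - η) ^ 2 * (1 + 2 * r * η * q)) :
    ∃ v0 ve v1 : ℝ, 0 < v0 ∧ 0 < ve ∧ 0 < v1 ∧ v0 + ve + v1 = p + q ∧
      (1 - η) * ve - 2 * r * η * v0 * (v1 + η * ve) = 0 ∧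
      -ve + 2 * r * (η ^ 2 * v0 * ve + (1 - η) ^ 2 * v1 * ve + v0 * v1) = 0 ∧
      η * ve - 2 * r * (1 - η) * v1 * (v0 + (1 - η) * ve) = 0 := by
  have h1η : 0 < 1 - η := by linarith
  have hD1 : 0 < 1 + 2 * r * η * q := by positivity
  have hD2 : 0 < 1 + 2 * r * (1 - η) * p := by positivity
  set v0 := p / (1 + 2 * r * η * q)
  set v1 := q / (1 + 2 * r * (1 - η) * p)
  set ve := 2 * r * η * q * v0 / (1 - η)
  have hv0D : v0 * (1 + 2 * r * η * q) = p := div_mul_cancel₀ p hD1.ne'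
  have hv1D : v1 * (1 + 2 * r * (1 - η) * p) = q := div_mul_cancel₀ q hD2.ne'
  have hveB : (1 - η) * ve = 2 * r * η * q * v0 := mul_div_cancel₀ _ h1η.ne'
  have hp_eq : v0 + (1 - η) * ve = p := by linear_combination hveB + hv0D
  have hveA : η * ve = 2 * r * (1 - η) * p * v1 := by
    refine mul_left_cancel₀ (by positivity :
      (1 - η) * (1 + 2 * r * η * q) * (1 + 2 * r * (1 - η) * p) ≠ 0) ?_
    linear_combination (η * (1 + 2 * r * η * q) * (1 + 2 * r * (1 - η) * p)) * hveB
      + (2 * r * η ^ 2 * q * (1 + 2 * r * (1 - η) * p)) * hv0D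
      - (2 * r * (1 - η) ^ 2 * p * (1 + 2 * r * η * q)) * hv1D + (2 * r * p * q) * hbal
  have hq_eq : v1 + η * ve = q := by linear_combination hveA + hv1D
  have e1 : (1 - η) * ve - 2 * r * η * v0 * (v1 + η * ve) = 0 := by
    rw [hq_eq]; linear_combination hveB
  have e3 : η * ve - 2 * r * (1 - η) * v1 * (v0 + (1 - η) * ve) = 0 := by
    rw [hp_eq]; linear_combination hveA
  refine ⟨v0, ve, v1, by positivity, by positivity, by positivity, ?_, e1, ?_, e3⟩
  · linear_combination hp_eq + hq_eq
  · linear_combination -e1 - e3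

theorem balance_typeBFreq (hη0 : η ≠ 0) (hη1 : η ≠ 1) (hr : r ≠ 0) :
    η ^ 2 * (1 + 2 * r * (1 - η) * typeBFreq η r)
      = (1 - η) ^ 2 * (1 + 2 * r * η * (1 - typeBFreq η r)) := by
  have : 1 - η ≠ 0 := sub_ne_zero.2 hη1.symm
  unfold typeBFreq
  field_simp
  ring

theorem pos_of_lt_mul_of_lt_mul (hη0 : 0 < η) (hη1 : η < 1)
    (hB : 2 * η - 1 < 2 * r * η * (1 - η) ^ 2) (hA : 1 - 2 * η < 2 * r * η ^ 2 * (1 - η)) :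
    0 < r := by
  have h1η : 0 < 1 - η := by linarith
  have : (2 * η - 1) ^ 2 < r * (4 * η ^ 2 * (1 - η) ^ 2) := by
    linear_combination η * hB + (1 - η) * hA
  exact pos_of_mul_pos_left ((sq_nonneg _).trans_lt this) (by positivity)

theorem typeBFreq_pos (hR : 0 < 2 * r * η * (1 - η))
    (hB : 2 * η - 1 < 2 * r * η * (1 - η) ^ 2) :
    0 < typeBFreq η r := by
  have : (2 * η - 1) / (2 * r * η * (1 - η)) < 1 - η := by
    rw [div_lt_iff₀ hR]; linear_combination hB
  unfold typeBFreq
  linarith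

theorem typeBFreq_lt_one (hR : 0 < 2 * r * η * (1 - η))
    (hA : 1 - 2 * η < 2 * r * η ^ 2 * (1 - η)) :
    typeBFreq η r < 1 := by
  have : -η < (2 * η - 1) / (2 * r * η * (1 - η)) := by
    rw [lt_div_iff₀ hR]; linear_combination hA
  unfold typeBFreq
  linarith

end HostParasite

open HostParasite in
/-- Fix `η ∈ (0,1)` and
`r > max{(2η−1)/(2η(1−η)²), (1−2η)/(2(1−η)η²)}`. Then the limiting host-state
dynamical system has an equilibrium in the interior of the unit simplex:
there are `v⁰, v^η, v¹ > 0` with `v⁰ + v^η + v¹ = 1` at which all three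
components of the vector field `G` vanish. -/
theorem interior_equilibrium_exists (η r : ℝ) (hη : η ∈ Set.Ioo (0 : ℝ) 1)
    (hr : max ((2 * η - 1) / (2 * η * (1 - η) ^ 2))
      ((1 - 2 * η) / (2 * (1 - η) * η ^ 2)) < r) :
    ∃ v0 ve v1 : ℝ, 0 < v0 ∧ 0 < ve ∧ 0 < v1 ∧ v0 + ve + v1 = 1 ∧
      (1 - η) * ve - 2 * r * η * v0 * (v1 + η * ve) = 0 ∧
      -ve + 2 * r * (η ^ 2 * v0 * ve + (1 - η) ^ 2 * v1 * ve + v0 * v1) = 0 ∧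
      η * ve - 2 * r * (1 - η) * v1 * (v0 + (1 - η) * ve) = 0 := by
  obtain ⟨hη0, hη1⟩ := hη
  have h1η : 0 < 1 - η := sub_pos.2 hη1
  obtain ⟨hB, hA⟩ := max_lt_iff.1 hr
  rw [div_lt_iff₀ (by positivity)] at hB hA
  have hr0 : 0 < r := pos_of_lt_mul_of_lt_mul hη0 hη1 (by linarith) (by linarith)
  have hR : 0 < 2 * r * η * (1 - η) := by positivity
  obtain ⟨v0, ve, v1, h⟩ := exists_equilibrium_of_balance hη0 hη1 hr0
    (typeBFreq_pos hR (by linarith)) (sub_pos.2 (typeBFreq_lt_one hR (by linarith)))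
    (balance_typeBFreq hη0.ne' hη1.ne hr0.ne')
  rw [add_sub_cancel] at h
  exact ⟨v0, ve, v1, h⟩
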